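/- arXiv:2512.14888 — 4 statements merged into one kernel-verified Lean document; each statement's English description precedes it below -/
import Mathlib

section
/- Let k be a field, s ≥ 1, f_1,…,f_s ∈ k[X_0,X_1,…,X_s], p ∈ k, and ξ = (ξ_1,…,ξ_s) ∈ k^s such that f_i(p,ξ) = 0 for 1 ≤ i ≤ s and det((∂f_i/∂X_j)(p,ξ))_{1≤i,j≤s} ≠ 0. In k⟦t⟧, define recursively R^{(0)} := (ξ_1,…,ξ_s) (constant power series) and, whenever det J(p+t, R^{(j)}) is a unit of k⟦t⟧, R^{(j+1)} := R^{(j)} − J(p+t, R^{(j)})^{-1}·(f_1(p+t,R^{(j)}),…,f_s(p+t,R^{(j)}))ᵗ, where J := (∂f_i/∂X_j)_{1≤i,j≤s}. Then the whole sequence (R^{(j)})_{j≥0} is well defined, and for every j ≥ 0: (1) f_i(p+t, R^{(j)}) lies in the ideal (t^{2^j}) of k⟦t⟧ for every 1 ≤ i ≤ s; (2) det J(p+t, R^{(j)}) has nonzero constant term, i.e. is a unit of k⟦t⟧; (3) R^{(j+1)}_m − R^{(j)}_m ∈ (t^{2^j}) for every 1 ≤ m ≤ s. -/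
/-! Constant coefficients never change along the iteration, since every correction lies in `(t)`;
hence `det J(p+t, R⁽ʲ⁾)` has constant term `det J(p, ξ) ≠ 0` and is a unit of `k⟦t⟧`. If
`f(p+t, R) ∈ I` and `R' = R - J⁻¹ f(p+t, R)`, then `R' - R ∈ I`, and the first-order Taylor
expansion `f(p+t, R') ≡ f(p+t, R) + J(p+t, R) (R' - R) mod I²` vanishes by the choice of `R'`.
With `I = (t^{2ʲ})` this doubles the exponent at each step. -/

noncomputable section

open MvPolynomial

variable {k : Type*}

/-- Substitution `X₀ ↦ p + t`, `X_m ↦ R m` of a polynomial `f ∈ k[X₀, X₁, …, X_s]` into the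
power series ring `k⟦t⟧`. -/
def psSubst [Field k] {s : ℕ} (p : k) (R : Fin s → PowerSeries k)
    (f : MvPolynomial (Fin (s + 1)) k) : PowerSeries k :=
  aeval (fun v : Fin (s + 1) =>
    Fin.cases (PowerSeries.C p + PowerSeries.X) R v) f

/-- The Jacobian matrix `J(p+t, R)` of the system `f` with respect to `X₁,…,X_s`. -/
def psJac [Field k] {s : ℕ} (f : Fin s → MvPolynomial (Fin (s + 1)) k) (p : k)
    (R : Fin s → PowerSeries k) : Matrix (Fin s) (Fin s) (PowerSeries k) :=
  Matrix.of fun i m => psSubst p R (pderiv (Fin.succ m) (f i))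

/-- One Newton–Hensel step `R ↦ R − J(p+t,R)⁻¹ · f(p+t,R)`; the inverse matrix is expressed
as `(det J)⁻¹ · adjugate J`, via `Ring.inverse` (which returns the genuine inverse whenever
`det J` is a unit). -/
def newtonStep [Field k] {s : ℕ} (f : Fin s → MvPolynomial (Fin (s + 1)) k) (p : k)
    (R : Fin s → PowerSeries k) : Fin s → PowerSeries k :=
  fun m => R m -
    Ring.inverse (psJac f p R).det *
      ((psJac f p R).adjugate.mulVec fun i => psSubst p R (f i)) m

/-- The Newton–Hensel sequence `R⁽⁰⁾ := ξ`, `R⁽ʲ⁺¹⁾ := N(R⁽ʲ⁾)`. -/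
def newtonSeq [Field k] {s : ℕ} (f : Fin s → MvPolynomial (Fin (s + 1)) k) (p : k)
    (ξ : Fin s → k) : ℕ → Fin s → PowerSeries k
  | 0 => fun m => PowerSeries.C (ξ m)
  | j + 1 => newtonStep f p (newtonSeq f p ξ j)

open scoped Matrix

theorem MvPolynomial.aeval_sub_sub_sum_pderiv_mem_sq {R A σ : Type*} [CommSemiring R] [CommRing A]
    [Algebra R A] [Fintype σ] (I : Ideal A) {x y : σ → A} (h : ∀ v, y v - x v ∈ I)
    (g : MvPolynomial σ R) :
    aeval y g - aeval x g - ∑ v, aeval x (pderiv v g) * (y v - x v) ∈ I ^ 2 := by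
  classical
  induction g using MvPolynomial.induction_on with
  | C a => simp
  | add g₁ g₂ h₁ h₂ =>
    convert add_mem h₁ h₂ using 1
    simp only [map_add, add_mul, Finset.sum_add_distrib]
    ring
  | mul_X g v ih =>
    set S := ∑ w, aeval x (pderiv w g) * (y w - x w)
    have hS : S ∈ I := Ideal.sum_mem _ fun w _ => Ideal.mul_mem_left _ _ (h w)
    have hg : aeval y g - aeval x g ∈ I := by
      simpa using add_mem (Ideal.pow_le_self two_ne_zero ih) hS
    have hsum : ∑ w, aeval x (pderiv w (g * X v)) * (y w - x w)
        = S * x v + aeval x g * (y v - x v) := by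
      simp only [Derivation.leibniz, pderiv_X, smul_eq_mul, map_add, map_mul, aeval_X, add_mul,
        Finset.sum_add_distrib, Finset.sum_mul, Pi.single_apply, mul_ite, mul_one, mul_zero,
        apply_ite (aeval x), map_zero, ite_mul, zero_mul, Finset.sum_ite_eq, Finset.mem_univ,
        if_true, S]
      rw [add_comm]
      exact congrArg₂ _ (Finset.sum_congr rfl fun _ _ => by ring) rfl
    -- remainder of `g * X v` = (remainder of `g`) * x v + (g(y) - g(x)) * (y v - x v)
    rw [hsum, map_mul, map_mul, aeval_X, aeval_X]
    convert add_mem (Ideal.mul_mem_right (x v) _ ih) (pow_two I ▸ Ideal.mul_mem_mul hg (h v))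
      using 1
    ring

theorem Matrix.mulVec_mem_of_forall_mem {R m n : Type*} [Semiring R] [Fintype n]
    (M : Matrix m n R) {I : Ideal R} {v : n → R} (h : ∀ j, v j ∈ I) (i : m) :
    (M *ᵥ v) i ∈ I :=
  Ideal.sum_mem _ fun j _ => Ideal.mul_mem_left _ _ (h j)

theorem PowerSeries.constantCoeff_eq_of_sub_mem_span_X_pow {R : Type*} [CommRing R]
    {φ ψ : PowerSeries R} {n : ℕ} (hn : n ≠ 0)
    (h : φ - ψ ∈ Ideal.span {(PowerSeries.X : PowerSeries R) ^ n}) :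
    PowerSeries.constantCoeff φ = PowerSeries.constantCoeff ψ := by
  rw [Ideal.mem_span_singleton] at h
  have := PowerSeries.X_dvd_iff.mp ((dvd_pow_self _ hn).trans h)
  rwa [map_sub, sub_eq_zero] at this

section NewtonHensel

variable [Field k] {s : ℕ} {p : k} {R R' : Fin s → PowerSeries k}

theorem constantCoeff_psSubst {ξ : Fin s → k} (h : ∀ m, PowerSeries.constantCoeff (R m) = ξ m)
    (g : MvPolynomial (Fin (s + 1)) k) :
    PowerSeries.constantCoeff (psSubst p R g) = eval (Fin.cases p ξ) g := by
  rw [psSubst, aeval_def, eval₂_comp_left]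
  congr 1
  funext v
  cases v using Fin.cases <;> simp [h]

theorem psSubst_sub_sub_sum_mem_sq (I : Ideal (PowerSeries k)) (h : ∀ m, R' m - R m ∈ I)
    (g : MvPolynomial (Fin (s + 1)) k) :
    psSubst p R' g - psSubst p R g
      - ∑ m, psSubst p R (pderiv m.succ g) * (R' m - R m) ∈ I ^ 2 := by
  have hI : ∀ v, Fin.cases (PowerSeries.C p + PowerSeries.X) R' v
      - Fin.cases (PowerSeries.C p + PowerSeries.X) R v ∈ I := fun v => by
    cases v using Fin.cases <;> simp [h]
  simpa [psSubst, Fin.sum_univ_succ] using aeval_sub_sub_sum_pderiv_mem_sq I hI g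

variable (f : Fin s → MvPolynomial (Fin (s + 1)) k)

theorem newtonStep_eq :
    newtonStep f p R = R - (psJac f p R)⁻¹ *ᵥ fun i => psSubst p R (f i) := by
  ext m
  simp [newtonStep, Matrix.inv_def, Matrix.smul_mulVec]

theorem psJac_mulVec_newtonStep_sub (h : IsUnit (psJac f p R).det) :
    psJac f p R *ᵥ (newtonStep f p R - R) = -fun i => psSubst p R (f i) := by
  rw [newtonStep_eq, sub_sub_cancel_left, Matrix.mulVec_neg, Matrix.mulVec_mulVec,
    Matrix.mul_nonsing_inv _ h, Matrix.one_mulVec]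

theorem newtonStep_sub_mem {I : Ideal (PowerSeries k)} (hF : ∀ i, psSubst p R (f i) ∈ I)
    (m : Fin s) : newtonStep f p R m - R m ∈ I := by
  rw [newtonStep_eq, Pi.sub_apply, sub_sub_cancel_left]
  exact neg_mem (Matrix.mulVec_mem_of_forall_mem _ hF m)

theorem psSubst_newtonStep_mem_sq {I : Ideal (PowerSeries k)} (hdet : IsUnit (psJac f p R).det)
    (hF : ∀ i, psSubst p R (f i) ∈ I) (i : Fin s) :
    psSubst p (newtonStep f p R) (f i) ∈ I ^ 2 := by
  have htaylor := psSubst_sub_sub_sum_mem_sq (p := p) I (newtonStep_sub_mem f hF) (f i)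
  have hlinear : ∑ m, psSubst p R (pderiv m.succ (f i)) * (newtonStep f p R m - R m)
      = -psSubst p R (f i) :=
    congrFun (psJac_mulVec_newtonStep_sub f hdet) i
  rwa [hlinear, sub_neg_eq_add, sub_add_cancel] at htaylor

variable {ξ : Fin s → k}

theorem constantCoeff_det_psJac (h : ∀ m, PowerSeries.constantCoeff (R m) = ξ m) :
    PowerSeries.constantCoeff (psJac f p R).det =
      (Matrix.of fun i m : Fin s => eval (Fin.cases p ξ) (pderiv m.succ (f i))).det := by
  rw [RingHom.map_det]
  congr 1
  ext i m
  exact constantCoeff_psSubst h _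

theorem newtonSeq_constantCoeff_and_mem
    (hzero : ∀ i : Fin s, eval (Fin.cases p ξ) (f i) = 0)
    (hjac : (Matrix.of fun i m : Fin s => eval (Fin.cases p ξ) (pderiv m.succ (f i))).det ≠ 0)
    (j : ℕ) :
    (∀ m, PowerSeries.constantCoeff (newtonSeq f p ξ j m) = ξ m) ∧
      ∀ i, psSubst p (newtonSeq f p ξ j) (f i) ∈
        Ideal.span {(PowerSeries.X : PowerSeries k) ^ 2 ^ j} := by
  induction j with
  | zero =>
    have hcc : ∀ m, PowerSeries.constantCoeff (newtonSeq f p ξ 0 m) = ξ m := by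
      simp [newtonSeq]
    refine ⟨hcc, fun i => ?_⟩
    rw [pow_zero, pow_one, Ideal.mem_span_singleton, PowerSeries.X_dvd_iff,
      constantCoeff_psSubst hcc]
    exact hzero i
  | succ j ih =>
    obtain ⟨hcc, hF⟩ := ih
    have hdet : IsUnit (psJac f p (newtonSeq f p ξ j)).det := by
      rw [PowerSeries.isUnit_iff_constantCoeff, constantCoeff_det_psJac f hcc]
      exact hjac.isUnit
    refine ⟨fun m => ?_, fun i => ?_⟩
    · rw [← hcc m]
      exact PowerSeries.constantCoeff_eq_of_sub_mem_span_X_pow (by positivity)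
        (newtonStep_sub_mem f hF m)
    · rw [pow_succ, pow_mul, ← Ideal.span_singleton_pow]
      exact psSubst_newtonStep_mem_sq f hdet hF i

end NewtonHensel

theorem statement11_general [Field k] {s : ℕ}
    (f : Fin s → MvPolynomial (Fin (s + 1)) k) (p : k) (ξ : Fin s → k)
    (hzero : ∀ i : Fin s, eval (fun v : Fin (s + 1) => Fin.cases p ξ v) (f i) = 0)
    (hjac : (Matrix.of fun i m : Fin s =>
      eval (fun v : Fin (s + 1) => Fin.cases p ξ v) (pderiv (Fin.succ m) (f i))).det ≠ 0) :
    ∀ j : ℕ,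
      (∀ i : Fin s, psSubst p (newtonSeq f p ξ j) (f i) ∈
        Ideal.span {(PowerSeries.X : PowerSeries k) ^ 2 ^ j}) ∧
      (PowerSeries.constantCoeff (psJac f p (newtonSeq f p ξ j)).det ≠ 0 ∧
        IsUnit (psJac f p (newtonSeq f p ξ j)).det) ∧
      (∀ m : Fin s, newtonSeq f p ξ (j + 1) m - newtonSeq f p ξ j m ∈
        Ideal.span {(PowerSeries.X : PowerSeries k) ^ 2 ^ j}) := by
  intro j
  obtain ⟨hcc, hF⟩ := newtonSeq_constantCoeff_and_mem f hzero hjac j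
  have hdet : PowerSeries.constantCoeff (psJac f p (newtonSeq f p ξ j)).det ≠ 0 := by
    rwa [constantCoeff_det_psJac f hcc]
  exact ⟨hF, ⟨hdet, PowerSeries.isUnit_iff_constantCoeff.mpr hdet.isUnit⟩,
    newtonStep_sub_mem f hF⟩

/-- If `f(p, ξ) = 0` and the Jacobian determinant of `f` with respect to
`X₁,…,X_s` does not vanish at `(p, ξ)`, then the Newton–Hensel sequence is well defined (the
Jacobian determinant is a unit of `k⟦t⟧` at every step, so `Ring.inverse` produces its genuine
inverse), `f_i(p+t, R⁽ʲ⁾) ∈ (t^{2ʲ})`, and `R⁽ʲ⁺¹⁾ ≡ R⁽ʲ⁾ mod (t^{2ʲ})`. -/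
theorem statement11 [Field k] {s : ℕ} (hs : 1 ≤ s)
    (f : Fin s → MvPolynomial (Fin (s + 1)) k) (p : k) (ξ : Fin s → k)
    (hzero : ∀ i : Fin s, eval (fun v : Fin (s + 1) => Fin.cases p ξ v) (f i) = 0)
    (hjac : (Matrix.of fun i m : Fin s =>
      eval (fun v : Fin (s + 1) => Fin.cases p ξ v) (pderiv (Fin.succ m) (f i))).det ≠ 0) :
    ∀ j : ℕ,
      (∀ i : Fin s, psSubst p (newtonSeq f p ξ j) (f i) ∈
        Ideal.span {(PowerSeries.X : PowerSeries k) ^ 2 ^ j}) ∧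
      (PowerSeries.constantCoeff (psJac f p (newtonSeq f p ξ j)).det ≠ 0 ∧
        IsUnit (psJac f p (newtonSeq f p ξ j)).det) ∧
      (∀ m : Fin s, newtonSeq f p ξ (j + 1) m - newtonSeq f p ξ j m ∈
        Ideal.span {(PowerSeries.X : PowerSeries k) ^ 2 ^ j}) :=
  statement11_general f p ξ hzero hjac
end
end

section
/- Let k be a field, s ≥ 1, f_1,…,f_s, g ∈ k[X_0,X_1,…,X_s], p ∈ k, δ ≥ 1, and j ≥ 0. Write A := k⟦t⟧ and say that an element of A[T] vanishes to precision c if all of its coefficients lie in the ideal (t^c) of A. Let J := (∂f_i/∂X_m)_{1≤i,m≤s} (derivatives with respect to X_1,…,X_s). Suppose M ∈ A[T] is monic of degree δ and V = (V_1,…,V_s) ∈ A[T]^s with deg V_m < δ for all m, satisfying: (i) V_1 − T vanishes to precision 2^j; (ii) for every 1 ≤ i ≤ s, the remainder of f_i(p+t, V) upon division by M vanishes to precision 2^j; (iii) the image of det J(p+t, V) is invertible in A[T]/(M). Then there exist M' ∈ A[T] monic of degree δ and V' = (V'_1,…,V'_s) ∈ A[T]^s with deg V'_m < δ such that M' − M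 and V'_m − V_m vanish to precision 2^j for all m, and: (i') V'_1 − T vanishes to precision 2^{j+1}; (ii') for every i, the remainder of f_i(p+t, V') upon division by M' vanishes to precision 2^{j+1}; (iii') the image of det J(p+t, V') is invertible in A[T]/(M'); moreover (iv') if the image of g(p+t, V) is invertible in A[T]/(M), then the image of g(p+t, V') is invertible in A[T]/(M'). -/
/-!
A Newton step `W = V + w`, where `w` solves `J(p+t, V) w ≡ -f(p+t, V) (mod M)` and is reduced
modulo `M`, makes every `f_i(p+t, W)` vanish modulo `(M) + (t^{2^{j+1}})` by Taylor's formula, but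
moves `W₁` away from `T` by `e = W₁ - T ∈ (t^{2^j})`. The substitution `T ↦ T - e` repairs this:
to first order in `e` it replaces `M` by `M' = M - (∂M · e mod M)` and each `W_m` by
`W_m - (∂W_m · e mod M')`, and the second-order terms are divisible by `t^{2^{j+1}}`.
Invertibility modulo `M'` survives because `M' ≡ M (mod t)` and `t` lies in the
Jacobson radical of the finite `k⟦t⟧`-algebra `k⟦t⟧[T]/(M')`.

The argument works for any ideal `I` of the coefficient ring in place of `(t^{2^j})`, with
"vanishing to precision `I`" meaning membership in `I · k⟦t⟧[T]`, and `I²` in place of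
`(t^{2^{j+1}})`.
-/

noncomputable section

open MvPolynomial

variable {k : Type*}

/-- Substitution `X₀ ↦ p + t` (a constant polynomial), `X_m ↦ V m` of a polynomial
`h ∈ k[X₀, X₁, …, X_s]` into the polynomial ring `k⟦t⟧[T]`. -/
def polySubst [Field k] {s : ℕ} (p : k) (V : Fin s → Polynomial (PowerSeries k))
    (h : MvPolynomial (Fin (s + 1)) k) : Polynomial (PowerSeries k) :=
  aeval (fun v : Fin (s + 1) =>
    Fin.cases (Polynomial.C (PowerSeries.C p + PowerSeries.X)) V v) h

/-- A polynomial of `k⟦t⟧[T]` vanishes to precision `c` if all of its coefficients lie in the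
ideal `(t^c)` of `k⟦t⟧`. -/
def toPrec [Field k] (c : ℕ) (P : Polynomial (PowerSeries k)) : Prop :=
  ∀ i : ℕ, P.coeff i ∈ Ideal.span {(PowerSeries.X : PowerSeries k) ^ c}

/-- The Jacobian determinant `det J(p+t, V)` in `k⟦t⟧[T]`. -/
def polyJacDet [Field k] {s : ℕ} (f : Fin s → MvPolynomial (Fin (s + 1)) k) (p : k)
    (V : Fin s → Polynomial (PowerSeries k)) : Polynomial (PowerSeries k) :=
  Matrix.det (Matrix.of fun i m : Fin s => polySubst p V (pderiv (Fin.succ m) (f i)))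

namespace MvPolynomial

variable {R B σ : Type*} [CommRing R] [CommRing B] [Algebra R B]

theorem aeval_sub_aeval_mem {I : Ideal B} {x y : σ → B} (h : ∀ i, x i - y i ∈ I)
    (P : MvPolynomial σ R) : aeval x P - aeval y P ∈ I := by
  rw [← Ideal.Quotient.eq, ← Ideal.Quotient.mkₐ_eq_mk R, comp_aeval_apply, comp_aeval_apply]
  congr 2 with i
  exact Ideal.Quotient.eq.mpr (h i)

theorem aeval_add_sub_mem_sq [Fintype σ] [DecidableEq σ] {I : Ideal B} (x w : σ → B)
    (hw : ∀ i, w i ∈ I) (P : MvPolynomial σ R) :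
    aeval (x + w) P - (aeval x P + ∑ i, aeval x (pderiv i P) * w i) ∈ I ^ 2 := by
  induction P using MvPolynomial.induction_on with
  | C a => simp
  | add P Q hP hQ =>
    convert add_mem hP hQ using 1
    simp only [map_add, add_mul, Finset.sum_add_distrib]
    ring
  | mul_X P v hP =>
    have hD : ∑ i, aeval x (pderiv i (P * X v)) * w i
        = (∑ i, aeval x (pderiv i P) * w i) * x v + aeval x P * w v := by
      simp only [Derivation.leibniz, pderiv_X, Pi.single_apply, apply_ite, smul_eq_mul, mul_one,
        mul_zero, map_add, map_zero, map_mul, aeval_X, add_mul, ite_mul, zero_mul, mul_right_comm,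
        Finset.sum_add_distrib, Finset.sum_ite_eq, Finset.mem_univ, if_true, Finset.sum_mul]
      rw [add_comm]
      exact congrArg (· + _) (Finset.sum_congr rfl fun i _ => by ring)
    have hDw : (∑ i, aeval x (pderiv i P) * w i) * w v ∈ I ^ 2 := by
      rw [sq]
      exact Ideal.mul_mem_mul (I.sum_mem fun i _ => I.mul_mem_left _ (hw i)) (hw v)
    convert add_mem ((I ^ 2).mul_mem_right (x v + w v) hP) hDw using 1
    rw [hD]
    simp only [map_mul, aeval_X, Pi.add_apply]
    ring

end MvPolynomial

namespace Matrix

variable {S n : Type*} [CommRing S] [Fintype n] [DecidableEq n]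

theorem det_sub_det_mem {I : Ideal S} {A B : Matrix n n S} (h : ∀ i j, A i j - B i j ∈ I) :
    A.det - B.det ∈ I := by
  rw [← Ideal.Quotient.eq, RingHom.map_det, RingHom.map_det]
  congr 1 with i j
  exact Ideal.Quotient.eq.mpr (h i j)

theorem exists_mulVec_sub_mem (I K : Ideal S) {J : Matrix n n S}
    (hJ : IsUnit (Ideal.Quotient.mk I J.det)) (r : n → S) (hr : ∀ i, r i ∈ K) :
    ∃ v : n → S, (∀ i, v i ∈ K) ∧ ∀ i, (J *ᵥ v) i - r i ∈ I := by
  obtain ⟨y, hy⟩ := Ideal.Quotient.mk_surjective (↑hJ.unit⁻¹ : S ⧸ I)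
  have hdety : J.det * y - 1 ∈ I := by
    rw [← Ideal.Quotient.eq, map_mul, hy, map_one, IsUnit.mul_val_inv]
  refine ⟨J.adjugate *ᵥ (y • r), fun i => ?_, fun i => ?_⟩
  · exact K.sum_mem fun j _ => K.mul_mem_left _ (K.mul_mem_left _ (hr j))
  · rw [mulVec_mulVec, mul_adjugate, smul_mulVec, one_mulVec]
    convert I.mul_mem_right (r i) hdety using 1
    simp only [Pi.smul_apply, smul_eq_mul]
    ring

end Matrix

theorem Ideal.map_jacobson_bot_le_of_isIntegral {R S : Type*} [CommRing R] [CommRing S]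
    [Algebra R S] [Algebra.IsIntegral R S] :
    (⊥ : Ideal R).jacobson.map (algebraMap R S) ≤ (⊥ : Ideal S).jacobson :=
  le_sInf fun 𝔪 h𝔪 => Ideal.map_le_iff_le_comap.mpr <|
    sInf_le ⟨bot_le, have := h𝔪.2; Ideal.isMaximal_comap_of_isIntegral_of_isMaximal 𝔪⟩

namespace Polynomial

variable {R : Type*} [CommRing R] {I : Ideal R}

theorem modByMonic_mem_map_C {p q : R[X]} (hq : q.Monic) (hp : p ∈ I.map C) :
    p %ₘ q ∈ I.map C := by
  rw [← Ideal.mk_ker (I := I), ← ker_mapRingHom, RingHom.mem_ker, coe_mapRingHom] at hp ⊢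
  rw [map_modByMonic _ hq, hp, zero_modByMonic]

theorem divByMonic_mem_map_C {p q : R[X]} (hq : q.Monic) (hp : p ∈ I.map C) :
    p /ₘ q ∈ I.map C := by
  rw [← Ideal.mk_ker (I := I), ← ker_mapRingHom, RingHom.mem_ker, coe_mapRingHom] at hp ⊢
  rw [map_divByMonic _ hq, hp, zero_divByMonic]

theorem modByMonic_mem_map_C_of_mem_sup {p q : R[X]} (hq : q.Monic)
    (hp : p ∈ Ideal.span {q} ⊔ I.map C) : p %ₘ q ∈ I.map C := by
  obtain ⟨a, ha, b, hb, rfl⟩ := Submodule.mem_sup.mp hp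
  obtain ⟨c, rfl⟩ := Ideal.mem_span_singleton'.mp ha
  rw [add_modByMonic, (modByMonic_eq_zero_iff_dvd hq).mpr (dvd_mul_left q c), zero_add]
  exact modByMonic_mem_map_C hq hb

theorem modByMonic_sub_mem_span (p q : R[X]) : p %ₘ q - p ∈ Ideal.span {q} :=
  Ideal.mem_span_singleton'.mpr ⟨-(p /ₘ q), by linear_combination (modByMonic_add_div p q).symm⟩

theorem derivative_mem_map_C {p : R[X]} (hp : p ∈ I.map C) : derivative p ∈ I.map C := by
  rw [Ideal.mem_map_C_iff] at hp ⊢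
  intro n
  rw [coeff_derivative]
  exact I.mul_mem_right _ (hp _)

theorem comp_X_sub_sub_mem_sq {J : Ideal R[X]} {e : R[X]} (he : e ∈ J) (P : R[X]) :
    P.comp (X - e) - (P - derivative P * e) ∈ J ^ 2 := by
  obtain ⟨c, hc⟩ := binomExpansion (P.map C) X (-e)
  simp only [← sub_eq_add_neg, derivative_map, eval_map, eval₂_C_X] at hc
  rw [comp, hc, neg_sq]
  convert (J ^ 2).mul_mem_left c (Ideal.pow_mem_pow he 2) using 1
  ring

theorem one_lt_natDegree_of_sub_X_mem (hI : I ≠ ⊤) {W M : R[X]} (hW : W - X ∈ I.map C)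
    (hWM : W.natDegree < M.natDegree) : 1 < M.natDegree := by
  by_contra! hM
  have hcoeff := Ideal.mem_map_C_iff.mp hW 1
  rw [coeff_sub, coeff_eq_zero_of_natDegree_lt (by omega), coeff_X_one, zero_sub,
    neg_mem_iff] at hcoeff
  exact hI (I.eq_top_of_isUnit_mem hcoeff isUnit_one)

theorem exists_monic_comp_X_sub_mem {M e : R[X]} (hM : M.Monic) (he : e ∈ I.map C) :
    ∃ M' : R[X], M'.Monic ∧ M'.natDegree = M.natDegree ∧ M' - M ∈ I.map C ∧
      M.comp (X - e) ∈ Ideal.span {M'} ⊔ I.map C ^ 2 := by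
  nontriviality R
  set r := (derivative M * e) %ₘ M
  set q := (derivative M * e) /ₘ M
  have hr : r ∈ I.map C := modByMonic_mem_map_C hM (Ideal.mul_mem_left _ _ he)
  have hq : q ∈ I.map C := divByMonic_mem_map_C hM (Ideal.mul_mem_left _ _ he)
  have hrM : r.degree < M.degree := degree_modByMonic_lt _ hM
  refine ⟨M - r, hM.sub_of_left hrM,
    natDegree_eq_of_degree_eq (degree_sub_eq_left_of_degree_lt hrM), by simpa using neg_mem hr, ?_⟩
  have hrq : r * q ∈ I.map C ^ 2 := by rw [sq]; exact Ideal.mul_mem_mul hr hq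
  -- Modulo `e²`, `M.comp (X - e) ≡ M - ∂M · e = (M - r) * (1 - q) - r * q`.
  convert add_mem
    (Ideal.mem_sup_left (Ideal.mul_mem_right (1 - q) _ (Ideal.mem_span_singleton_self (M - r))))
    (Ideal.mem_sup_right (sub_mem (comp_X_sub_sub_mem_sq he M) hrq)) using 1
  linear_combination modByMonic_add_div (derivative M * e) M

theorem comp_X_sub_sub_modByMonic_mem (M' : R[X]) {e : R[X]} (he : e ∈ I.map C) (Q : R[X]) :
    Q.comp (X - e) - (Q - (derivative Q * e) %ₘ M') ∈ Ideal.span {M'} ⊔ I.map C ^ 2 := by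
  convert sub_mem (Ideal.mem_sup_right (comp_X_sub_sub_mem_sq he Q))
    (Ideal.mem_sup_left (Ideal.mul_mem_right ((derivative Q * e) /ₘ M') _
      (Ideal.mem_span_singleton_self M'))) using 1
  linear_combination modByMonic_add_div (derivative Q * e) M'

theorem comp_X_sub_mem_of_mem {M M' e Q : R[X]}
    (hM : M.comp (X - e) ∈ Ideal.span {M'} ⊔ I.map C ^ 2)
    (hQ : Q ∈ Ideal.span {M} ⊔ I.map C ^ 2) :
    Q.comp (X - e) ∈ Ideal.span {M'} ⊔ I.map C ^ 2 := by
  have hC : (compRingHom (X - e)).comp C = C := RingHom.ext fun a => C_comp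
  have := Ideal.mem_map_of_mem (compRingHom (X - e)) hQ
  rw [Ideal.map_sup, Ideal.map_span, Set.image_singleton, Ideal.map_pow, Ideal.map_map, hC]
    at this
  exact sup_le (Ideal.span_singleton_le_iff_mem _ |>.mpr hM) le_sup_right this

theorem isUnit_mk_of_sub_mem (hI : I ≤ (⊥ : Ideal R).jacobson) {M M' x x' : R[X]}
    (hM' : M'.Monic) (hx : IsUnit (Ideal.Quotient.mk (Ideal.span {M}) x))
    (hMM' : M - M' ∈ I.map C) (hxx' : x' - x ∈ I.map C) :
    IsUnit (Ideal.Quotient.mk (Ideal.span {M'}) x') := by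
  obtain ⟨y, hy⟩ := Ideal.Quotient.mk_surjective (↑hx.unit⁻¹ : R[X] ⧸ Ideal.span {M})
  obtain ⟨α, hα⟩ : M ∣ x * y - 1 := by
    rw [← Ideal.mem_span_singleton, ← Ideal.Quotient.eq, map_mul, hy, map_one,
      IsUnit.mul_val_inv]
  set d := (x' - x) * y + (M - M') * α
  have hd : d ∈ I.map C := add_mem (Ideal.mul_mem_right _ _ hxx') (Ideal.mul_mem_right _ _ hMM')
  have : Module.Finite R (AdjoinRoot M') := (AdjoinRoot.powerBasis' hM').finite
  have hdJ : AdjoinRoot.mk M' d ∈ (⊥ : Ideal (AdjoinRoot M')).jacobson := by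
    refine Ideal.map_jacobson_bot_le_of_isIntegral (Ideal.map_mono hI ?_)
    have := Ideal.mem_map_of_mem (AdjoinRoot.mk M') hd
    rwa [Ideal.map_map] at this
  show IsUnit (AdjoinRoot.mk M' x')
  refine isUnit_of_mul_isUnit_left (y := AdjoinRoot.mk M' y) ?_
  convert Ideal.mem_jacobson_bot.mp hdJ 1 using 1
  rw [mul_one, ← map_mul, ← map_one (AdjoinRoot.mk M'), ← map_add, AdjoinRoot.mk_eq_mk]
  exact ⟨α, by linear_combination hα⟩

end Polynomial

section polySubst

open Polynomial

variable [Field k] {s : ℕ} (p : k)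

theorem toPrec_iff_mem_map_C {c : ℕ} {P : (PowerSeries k)[X]} :
    toPrec c P ↔ P ∈ (Ideal.span {PowerSeries.X ^ c}).map Polynomial.C :=
  Ideal.mem_map_C_iff.symm

theorem polySubst_sub_polySubst_mem {I : Ideal (PowerSeries k)[X]}
    {U U' : Fin s → (PowerSeries k)[X]} (h : ∀ m, U m - U' m ∈ I)
    (P : MvPolynomial (Fin (s + 1)) k) : polySubst p U P - polySubst p U' P ∈ I :=
  MvPolynomial.aeval_sub_aeval_mem (Fin.cases (by simp) h) P

theorem polySubst_add_sub_mem_sq {I : Ideal (PowerSeries k)[X]}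
    (V w : Fin s → (PowerSeries k)[X]) (hw : ∀ m, w m ∈ I) (P : MvPolynomial (Fin (s + 1)) k) :
    polySubst p (V + w) P -
      (polySubst p V P + ∑ m, polySubst p V (pderiv m.succ P) * w m) ∈ I ^ 2 := by
  have hx : (Fin.cases (Polynomial.C (PowerSeries.C p + PowerSeries.X)) (V + w) : Fin (s + 1) → _) =
      Fin.cases (Polynomial.C (PowerSeries.C p + PowerSeries.X)) V + Fin.cases 0 w := by
    funext v
    cases v using Fin.cases <;> simp
  have := MvPolynomial.aeval_add_sub_mem_sq (R := k) (I := I)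
    (Fin.cases (Polynomial.C (PowerSeries.C p + PowerSeries.X)) V) (Fin.cases 0 w)
    (fun v => by cases v using Fin.cases <;> simp [hw]) P
  rw [Fin.sum_univ_succ] at this
  simpa only [polySubst, hx, Fin.cases_zero, Fin.cases_succ, mul_zero, zero_add] using this

theorem polySubst_comp (V : Fin s → (PowerSeries k)[X]) (q : (PowerSeries k)[X])
    (P : MvPolynomial (Fin (s + 1)) k) :
    polySubst p (fun m => (V m).comp q) P = (polySubst p V P).comp q := by
  rw [comp_eq_aeval, polySubst, polySubst,
    ← AlgHom.restrictScalars_apply k (Polynomial.aeval q), MvPolynomial.comp_aeval_apply]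
  congr 1 with v
  cases v using Fin.cases <;> simp [comp_eq_aeval]

theorem polyJacDet_sub_polyJacDet_mem (f : Fin s → MvPolynomial (Fin (s + 1)) k)
    {I : Ideal (PowerSeries k)[X]} {U U' : Fin s → (PowerSeries k)[X]}
    (h : ∀ m, U m - U' m ∈ I) : polyJacDet f p U - polyJacDet f p U' ∈ I :=
  Matrix.det_sub_det_mem fun _ _ => polySubst_sub_polySubst_mem p h _

end polySubst

section NewtonHensel

open Polynomial

variable [Field k] {s : ℕ} (p : k) {I : Ideal (PowerSeries k)}

theorem exists_newton_step (f : Fin s → MvPolynomial (Fin (s + 1)) k)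
    {M : (PowerSeries k)[X]} (hM : M.Monic) {V : Fin s → (PowerSeries k)[X]}
    (hVdeg : ∀ m, (V m).natDegree < M.natDegree)
    (hf : ∀ i, polySubst p V (f i) %ₘ M ∈ I.map Polynomial.C)
    (hdet : IsUnit (Ideal.Quotient.mk (Ideal.span {M}) (polyJacDet f p V))) :
    ∃ W : Fin s → (PowerSeries k)[X], (∀ m, (W m).natDegree < M.natDegree) ∧
      (∀ m, W m - V m ∈ I.map Polynomial.C) ∧
      ∀ i, polySubst p W (f i) ∈ Ideal.span {M} ⊔ I.map Polynomial.C ^ 2 := by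
  obtain ⟨v, hvI, hv⟩ :=
    Matrix.exists_mulVec_sub_mem (Ideal.span {M}) _ hdet _ fun i => neg_mem (hf i)
  set w := fun m => v m %ₘ M
  have hw : ∀ m, w m ∈ I.map Polynomial.C := fun m => modByMonic_mem_map_C hM (hvI m)
  refine ⟨V + w, fun m => ?_, fun m => by simpa using hw m, fun i => ?_⟩
  · have hM1 : M ≠ 1 := by rintro rfl; simpa using hVdeg m
    exact (natDegree_add_le _ _).trans_lt (max_lt (hVdeg m) (natDegree_modByMonic_lt _ hM hM1))
  · have hJw : polySubst p V (f i) + ∑ m, polySubst p V (pderiv m.succ (f i)) * w m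
        ∈ Ideal.span {M} := by
      have hwv : ∑ m, polySubst p V (pderiv m.succ (f i)) * (w m - v m) ∈ Ideal.span {M} :=
        Ideal.sum_mem _ fun m _ => Ideal.mul_mem_left _ _ (modByMonic_sub_mem_span _ _)
      convert sub_mem (add_mem hwv (hv i)) (modByMonic_sub_mem_span (polySubst p V (f i)) M)
        using 1
      simp only [Matrix.mulVec, dotProduct, Matrix.of_apply, mul_sub, Finset.sum_sub_distrib]
      ring
    have hT := polySubst_add_sub_mem_sq p V w hw (f i)
    convert add_mem (Ideal.mem_sup_right hT) (Ideal.mem_sup_left hJw) using 1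
    ring

theorem exists_recentring (m₀ : Fin s) {M : (PowerSeries k)[X]} (hM : M.Monic)
    (hMdeg : 1 < M.natDegree) {W : Fin s → (PowerSeries k)[X]}
    (hWdeg : ∀ m, (W m).natDegree < M.natDegree)
    (hW : W m₀ - Polynomial.X ∈ I.map Polynomial.C) :
    ∃ (M' : (PowerSeries k)[X]) (V' : Fin s → (PowerSeries k)[X]),
      M'.Monic ∧ M'.natDegree = M.natDegree ∧ (∀ m, (V' m).natDegree < M.natDegree) ∧
      M' - M ∈ I.map Polynomial.C ∧ (∀ m, V' m - W m ∈ I.map Polynomial.C) ∧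
      V' m₀ - Polynomial.X ∈ I.map Polynomial.C ^ 2 ∧
      ∀ P, polySubst p W P ∈ Ideal.span {M} ⊔ I.map Polynomial.C ^ 2 →
        polySubst p V' P ∈ Ideal.span {M'} ⊔ I.map Polynomial.C ^ 2 := by
  set e := W m₀ - Polynomial.X with he
  obtain ⟨M', hM', hM'deg, hM'M, hMcomp⟩ := exists_monic_comp_X_sub_mem hM hW
  have hM'1 : M' ≠ 1 := by rintro rfl; rw [natDegree_one] at hM'deg; omega
  set V' := fun m => W m - (derivative (W m) * e) %ₘ M'
  refine ⟨M', V', hM', hM'deg, fun m => ?_, hM'M, fun m => ?_, ?_, fun P hP => ?_⟩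
  · refine (natDegree_sub_le _ _).trans_lt (max_lt (hWdeg m) ?_)
    exact hM'deg ▸ natDegree_modByMonic_lt _ hM' hM'1
  · simpa [V'] using neg_mem (modByMonic_mem_map_C hM' (Ideal.mul_mem_left _ _ hW))
  · have hemod : e %ₘ M' = e := by
      refine (modByMonic_eq_self_iff hM').mpr (degree_lt_degree ?_)
      refine (natDegree_sub_le _ _).trans_lt (max_lt (hM'deg ▸ hWdeg m₀) ?_)
      rw [natDegree_X]
      omega
    have hV' : V' m₀ - Polynomial.X = -((derivative e * e) %ₘ M') := by
      have hW₀ : W m₀ = Polynomial.X + e := by rw [he]; ring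
      simp only [V']
      rw [hW₀, derivative_add, derivative_X, add_mul, one_mul, add_modByMonic, ← hW₀, hemod, he]
      ring
    rw [hV', ← Ideal.map_pow]
    refine neg_mem (modByMonic_mem_map_C hM' ?_)
    rw [Ideal.map_pow, sq]
    exact Ideal.mul_mem_mul (derivative_mem_map_C hW) hW
  · have hV'comp := polySubst_sub_polySubst_mem p
      (fun m => comp_X_sub_sub_modByMonic_mem M' hW (W m)) P
    rw [polySubst_comp] at hV'comp
    simpa using sub_mem (comp_X_sub_mem_of_mem hMcomp hP) hV'comp

end NewtonHensel

theorem statement14_general [Field k] {s : ℕ} (hs : 1 ≤ s)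
    (f : Fin s → MvPolynomial (Fin (s + 1)) k) (g : MvPolynomial (Fin (s + 1)) k)
    (p : k) (δ : ℕ) (j : ℕ)
    (M : Polynomial (PowerSeries k)) (hM : M.Monic) (hMdeg : M.natDegree = δ)
    (V : Fin s → Polynomial (PowerSeries k)) (hVdeg : ∀ m : Fin s, (V m).natDegree < δ)
    -- (i) `V₁ - T` vanishes to precision `2ʲ`
    (hV1 : toPrec (2 ^ j) (V ⟨0, hs⟩ - Polynomial.X))
    -- (ii) the remainder of `f_i(p+t, V)` upon division by `M` vanishes to precision `2ʲ`
    (hfi : ∀ i : Fin s, toPrec (2 ^ j) (polySubst p V (f i) %ₘ M))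
    -- (iii) `det J(p+t, V)` is invertible modulo `M`
    (hdet : IsUnit (Ideal.Quotient.mk (Ideal.span {M}) (polyJacDet f p V))) :
    ∃ (M' : Polynomial (PowerSeries k)) (V' : Fin s → Polynomial (PowerSeries k)),
      M'.Monic ∧ M'.natDegree = δ ∧ (∀ m : Fin s, (V' m).natDegree < δ) ∧
      toPrec (2 ^ j) (M' - M) ∧ (∀ m : Fin s, toPrec (2 ^ j) (V' m - V m)) ∧
      -- (i')
      toPrec (2 ^ (j + 1)) (V' ⟨0, hs⟩ - Polynomial.X) ∧
      -- (ii')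
      (∀ i : Fin s, toPrec (2 ^ (j + 1)) (polySubst p V' (f i) %ₘ M')) ∧
      -- (iii')
      IsUnit (Ideal.Quotient.mk (Ideal.span {M'}) (polyJacDet f p V')) ∧
      -- (iv')
      (IsUnit (Ideal.Quotient.mk (Ideal.span {M}) (polySubst p V g)) →
        IsUnit (Ideal.Quotient.mk (Ideal.span {M'}) (polySubst p V' g))) := by
  subst hMdeg
  set I : Ideal (PowerSeries k) := Ideal.span {PowerSeries.X ^ 2 ^ j}
  have hIsq : I ^ 2 = Ideal.span {PowerSeries.X ^ 2 ^ (j + 1)} := by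
    rw [Ideal.span_singleton_pow, ← pow_mul, pow_succ]
  have hI : I ≤ IsLocalRing.maximalIdeal _ := by
    rw [Ideal.span_le, Set.singleton_subset_iff, SetLike.mem_coe, IsLocalRing.mem_maximalIdeal,
      mem_nonunits_iff, PowerSeries.isUnit_iff_constantCoeff]
    simp
  simp only [toPrec_iff_mem_map_C, ← hIsq] at hV1 hfi ⊢
  obtain ⟨W, hWdeg, hWV, hWf⟩ := exists_newton_step p f hM hVdeg hfi hdet
  have hW₀ : W ⟨0, hs⟩ - Polynomial.X ∈ I.map Polynomial.C := by
    simpa using add_mem (hWV ⟨0, hs⟩) hV1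
  have hMdeg₁ := Polynomial.one_lt_natDegree_of_sub_X_mem
    (ne_top_of_le_ne_top (IsLocalRing.maximalIdeal.isMaximal _).ne_top hI) hW₀ (hWdeg _)
  obtain ⟨M', V', hM', hM'deg, hV'deg, hM'M, hV'W, hV'₀, hV'f⟩ :=
    exists_recentring p ⟨0, hs⟩ hM hMdeg₁ hWdeg hW₀
  rw [← Ideal.map_pow] at hWf hV'₀ hV'f
  have hJac := hI.trans (IsLocalRing.maximalIdeal_le_jacobson ⊥)
  have hV'V : ∀ m, V' m - V m ∈ I.map Polynomial.C := fun m => by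
    simpa using add_mem (hV'W m) (hWV m)
  have hMM' : M - M' ∈ I.map Polynomial.C := by simpa using neg_mem hM'M
  exact ⟨M', V', hM', hM'deg, hV'deg, hM'M, hV'V, hV'₀,
    fun i => Polynomial.modByMonic_mem_map_C_of_mem_sup hM' (hV'f _ (hWf i)),
    Polynomial.isUnit_mk_of_sub_mem hJac hM' hdet hMM' (polyJacDet_sub_polyJacDet_mem p f hV'V),
    fun hg => Polynomial.isUnit_mk_of_sub_mem hJac hM' hg hMM'
      (polySubst_sub_polySubst_mem p hV'V g)⟩

/-- one step of the Newton–Hensel lifting, Proposition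
`prop: main loop Newton lifting` of the paper. -/
theorem statement14 [Field k] {s : ℕ} (hs : 1 ≤ s)
    (f : Fin s → MvPolynomial (Fin (s + 1)) k) (g : MvPolynomial (Fin (s + 1)) k)
    (p : k) (δ : ℕ) (hδ : 1 ≤ δ) (j : ℕ)
    (M : Polynomial (PowerSeries k)) (hM : M.Monic) (hMdeg : M.natDegree = δ)
    (V : Fin s → Polynomial (PowerSeries k)) (hVdeg : ∀ m : Fin s, (V m).natDegree < δ)
    -- (i) `V₁ - T` vanishes to precision `2ʲ`
    (hV1 : toPrec (2 ^ j) (V ⟨0, hs⟩ - Polynomial.X))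
    -- (ii) the remainder of `f_i(p+t, V)` upon division by `M` vanishes to precision `2ʲ`
    (hfi : ∀ i : Fin s, toPrec (2 ^ j) (polySubst p V (f i) %ₘ M))
    -- (iii) `det J(p+t, V)` is invertible modulo `M`
    (hdet : IsUnit (Ideal.Quotient.mk (Ideal.span {M}) (polyJacDet f p V))) :
    ∃ (M' : Polynomial (PowerSeries k)) (V' : Fin s → Polynomial (PowerSeries k)),
      M'.Monic ∧ M'.natDegree = δ ∧ (∀ m : Fin s, (V' m).natDegree < δ) ∧
      toPrec (2 ^ j) (M' - M) ∧ (∀ m : Fin s, toPrec (2 ^ j) (V' m - V m)) ∧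
      -- (i')
      toPrec (2 ^ (j + 1)) (V' ⟨0, hs⟩ - Polynomial.X) ∧
      -- (ii')
      (∀ i : Fin s, toPrec (2 ^ (j + 1)) (polySubst p V' (f i) %ₘ M')) ∧
      -- (iii')
      IsUnit (Ideal.Quotient.mk (Ideal.span {M'}) (polyJacDet f p V')) ∧
      -- (iv')
      (IsUnit (Ideal.Quotient.mk (Ideal.span {M}) (polySubst p V g)) →
        IsUnit (Ideal.Quotient.mk (Ideal.span {M'}) (polySubst p V' g))) :=
  statement14_general hs f g p δ j M hM hMdeg V hVdeg hV1 hfi hdet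
end
end

section
/- Let k be an algebraically closed field, m ≥ 1, and I ⊆ k[X_0,X_1,…,X_m] a radical ideal with zero set C := {x ∈ k^{m+1} : f(x)=0 for all f ∈ I} such that I is the vanishing ideal of C. Suppose that A := k[X_0,…,X_m]/I, viewed as a module over k[X_0] via the map sending X_0 to its class, is finitely generated and free. Let F ∈ k[X_0,…,X_m] be such that C ∩ {x : F(x)=0} is finite, let χ ∈ k[X_0][T] be the characteristic polynomial of the k[X_0]-linear endomorphism of A given by multiplication by the class of F, and let ã ∈ k[X_0] be its constant term. Then: (1) ã ≠ 0; (2) ã ∈ I + (F) (the ideal of k[X_0,…,X_m] generated by I and F); in particular, ã(x_0) = 0 for every point (x_0,x_1,…,x_m) ∈ C with F(x_0,…,x_m) = 0. -/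
/-!
Cayley–Hamilton gives `χ(F̄) = 0` in `A`, so `ã = χ(0)` is a multiple of `F̄` in `A`, i.e.
`ã ∈ I + (F)`. Up to sign `ã` is the norm `N(F̄)` of `A` over `k[X₀]`. If no point of
`C ∩ {F = 0}` has first coordinate `c`, the Nullstellensatz makes `F̄` invertible modulo
`X₀ - c`, and multiplicativity of the norm makes `N(F̄)(c)` a unit. So `ã = 0` would force every
`c ∈ k` to be the first coordinate of one of the finitely many points of `C ∩ {F = 0}`,
impossible since `k` is infinite.
-/

open MvPolynomial

variable {k : Type*}

section
variable {R A : Type*} [CommRing R] [CommRing A] [Algebra R A]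

theorem algebraMap_coeff_zero_mem_span_of_aeval_eq_zero {p : Polynomial R} {x : A}
    (h : Polynomial.aeval x p = 0) : algebraMap R A (p.coeff 0) ∈ Ideal.span {x} := by
  rw [Ideal.mem_span_singleton']
  refine ⟨-Polynomial.aeval x p.divX, ?_⟩
  have := congrArg (Polynomial.aeval x) p.divX_mul_X_add
  rw [h, map_add, map_mul, Polynomial.aeval_X, Polynomial.aeval_C] at this
  linear_combination -this

variable [Module.Free R A] [Module.Finite R A]

theorem algebraMap_coeff_zero_charpoly_mulLeft_mem_span (x : A) :
    algebraMap R A ((LinearMap.mulLeft R x).charpoly.coeff 0) ∈ Ideal.span {x} :=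
  algebraMap_coeff_zero_mem_span_of_aeval_eq_zero (Algebra.aeval_self_charpoly_lmul x)

theorem coeff_zero_charpoly_mulLeft (x : A) :
    (LinearMap.mulLeft R x).charpoly.coeff 0 = (-1) ^ Module.finrank R A * Algebra.norm R x := by
  rw [Algebra.norm_apply, LinearMap.det_eq_sign_charpoly_coeff, ← mul_assoc, ← pow_add,
    Even.neg_one_pow ⟨_, rfl⟩, one_mul]
  rfl

theorem map_norm_one_add_algebraMap_mul {S : Type*} [CommRing S] (φ : R →+* S) {r : R}
    (hr : φ r = 0) (p : A) : φ (Algebra.norm R (1 + algebraMap R A r * p)) = 1 := by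
  rw [Algebra.norm_eq_matrix_det (Module.Free.chooseBasis R A), RingHom.map_det, map_add,
    map_mul, AlgHom.commutes, map_one, map_add, map_mul, Matrix.algebraMap_eq_diagonal]
  simp [hr]

theorem isUnit_map_norm_of_span_pair_eq_top {S : Type*} [CommRing S] (φ : R →+* S) {r : R}
    (hr : φ r = 0) {x : A} (hx : Ideal.span {algebraMap R A r, x} = ⊤) :
    IsUnit (φ (Algebra.norm R x)) := by
  obtain ⟨p, q, hpq⟩ := Ideal.mem_span_pair.mp (hx ▸ Submodule.mem_top : (1 : A) ∈ _)
  have hxq : x * q = 1 + algebraMap R A r * -p := by linear_combination hpq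
  refine IsUnit.of_mul_eq_one (φ (Algebra.norm R q)) ?_
  rw [← map_mul, ← map_mul, hxq, map_norm_one_add_algebraMap_mul φ hr]

end

namespace MvPolynomial

variable [Field k] {σ : Type*}

theorem eq_top_of_zeroLocus_eq_empty [IsAlgClosed k] [Finite σ] {J : Ideal (MvPolynomial σ k)}
    (hJ : zeroLocus k J = ∅) : J = ⊤ := by
  rw [← Ideal.radical_eq_top, ← vanishingIdeal_zeroLocus_eq_radical (K := k), hJ,
    vanishingIdeal_empty]

theorem eval_polynomial_aeval_X (x : σ → k) (i : σ) (p : Polynomial k) :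
    eval x (Polynomial.aeval (X i) p) = p.eval (x i) := by
  induction p using Polynomial.induction_on <;> simp_all

theorem sup_span_X_sub_C_eq_top [IsAlgClosed k] [Finite σ] {I : Ideal (MvPolynomial σ k)}
    {F : MvPolynomial σ k} {i : σ} {c : k}
    (hc : ∀ x ∈ zeroLocus k I ∩ {x | eval x F = 0}, x i ≠ c) :
    I ⊔ Ideal.span {X i - C c, F} = ⊤ := by
  refine eq_top_of_zeroLocus_eq_empty (Set.eq_empty_of_forall_notMem fun x hx => ?_)
  have hspan (p) (hp : p ∈ ({X i - C c, F} : Set _)) : eval x p = 0 :=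
    hx p (Ideal.mem_sup_right (Ideal.subset_span hp))
  refine hc x ⟨fun p hp => hx p (Ideal.mem_sup_left hp), hspan F (by simp)⟩ ?_
  have := hspan (X i - C c) (by simp)
  simp only [map_sub, eval_X, eval_C] at this
  exact sub_eq_zero.mp this

section QuotientAlgebra

variable {I : Ideal (MvPolynomial σ k)} (F : MvPolynomial σ k) {i : σ}
  [Algebra (Polynomial k) (MvPolynomial σ k ⧸ I)]
  (halg : ∀ p, algebraMap (Polynomial k) (MvPolynomial σ k ⧸ I) p =
    Ideal.Quotient.mk I (Polynomial.aeval (X i) p))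
include halg

theorem aeval_X_mem_sup_span_of_algebraMap_mem_span {a : Polynomial k}
    (ha : algebraMap (Polynomial k) (MvPolynomial σ k ⧸ I) a ∈
      Ideal.span {Ideal.Quotient.mk I F}) :
    Polynomial.aeval (X i) a ∈ I ⊔ Ideal.span {F} := by
  rw [halg, ← Set.image_singleton, ← Ideal.map_span, Ideal.mem_quotient_iff_mem_sup] at ha
  rwa [sup_comm]

theorem norm_mk_ne_zero [IsAlgClosed k] [Finite σ]
    [Module.Free (Polynomial k) (MvPolynomial σ k ⧸ I)]
    [Module.Finite (Polynomial k) (MvPolynomial σ k ⧸ I)]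
    (hfin : (zeroLocus k I ∩ {x | eval x F = 0}).Finite) :
    Algebra.norm (Polynomial k) (Ideal.Quotient.mk I F) ≠ 0 := by
  intro hnorm
  have hfiber (c : k) : ∃ x ∈ zeroLocus k I ∩ {x | eval x F = 0}, x i = c := by
    by_contra! hc
    have hspan : Ideal.span {algebraMap (Polynomial k) _ (Polynomial.X - Polynomial.C c),
        Ideal.Quotient.mk I F} = ⊤ := by
      simpa [Ideal.map_sup, Ideal.map_span, Ideal.map_top, Set.image_pair, halg] using
        congrArg (Ideal.map (Ideal.Quotient.mk I)) (sup_span_X_sub_C_eq_top hc)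
    simpa [hnorm] using
      isUnit_map_norm_of_span_pair_eq_top (Polynomial.evalRingHom c) (by simp) hspan
  exact Set.infinite_univ ((hfin.image fun x : σ → k => x i).subset fun c _ => hfiber c)

end QuotientAlgebra

end MvPolynomial

theorem statement16_general [Field k] [IsAlgClosed k] {m : ℕ}
    (I : Ideal (MvPolynomial (Fin (m + 1)) k))
    (F : MvPolynomial (Fin (m + 1)) k)
    (hfin : (MvPolynomial.zeroLocus k I ∩ {x | eval x F = 0}).Finite) :
    letI : Algebra (Polynomial k) (MvPolynomial (Fin (m + 1)) k ⧸ I) :=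
      ((Polynomial.aeval (Ideal.Quotient.mk I (MvPolynomial.X (0 : Fin (m + 1)))) :
        Polynomial k →ₐ[k] MvPolynomial (Fin (m + 1)) k ⧸ I).toRingHom).toAlgebra
    ∀ (hfg : Module.Finite (Polynomial k) (MvPolynomial (Fin (m + 1)) k ⧸ I))
      (hfree : Module.Free (Polynomial k) (MvPolynomial (Fin (m + 1)) k ⧸ I)),
      haveI := hfg
      haveI := hfree
      letI χ : Polynomial (Polynomial k) :=
        LinearMap.charpoly
          (LinearMap.mulLeft (Polynomial k) (Ideal.Quotient.mk I F))
      ((χ.coeff 0 ≠ 0) ∧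
        (Polynomial.aeval (MvPolynomial.X (0 : Fin (m + 1)) :
            MvPolynomial (Fin (m + 1)) k) (χ.coeff 0) ∈ I ⊔ Ideal.span {F}) ∧
        (∀ x ∈ MvPolynomial.zeroLocus k I, eval x F = 0 →
          Polynomial.eval (x 0) (χ.coeff 0) = 0)) := by
  intro hfg hfree
  let : Algebra (Polynomial k) (MvPolynomial (Fin (m + 1)) k ⧸ I) :=
    (Polynomial.aeval (Ideal.Quotient.mk I (X 0))).toRingHom.toAlgebra
  have halg (p : Polynomial k) : algebraMap (Polynomial k) (MvPolynomial (Fin (m + 1)) k ⧸ I) p =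
      Ideal.Quotient.mk I (Polynomial.aeval (X 0) p) :=
    Polynomial.aeval_algHom_apply (Ideal.Quotient.mkₐ k I) _ p
  have hmem := aeval_X_mem_sup_span_of_algebraMap_mem_span F halg
    (algebraMap_coeff_zero_charpoly_mulLeft_mem_span _)
  refine ⟨?_, hmem, fun x hx hFx => ?_⟩
  · rw [coeff_zero_charpoly_mulLeft]
    exact mul_ne_zero (by simp) (norm_mk_ne_zero F halg hfin)
  · have hker : I ⊔ Ideal.span {F} ≤ RingHom.ker (eval x) :=
      sup_le (fun p hp => hx p hp) (Ideal.span_le.mpr (by simpa using hFx))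
    rw [← eval_polynomial_aeval_X]
    exact hker hmem

/-- Let `I` be a radical ideal of `k[X₀,…,X_m]` which is the vanishing ideal
of its zero set `C`, such that `A := k[X₀,…,X_m]/I` is a finitely generated free module over
`k[X₀]` (acting through `X₀`).  If `C ∩ {F = 0}` is finite, then the constant term `ã` of the
characteristic polynomial `χ` of multiplication by `F` on `A` is nonzero and lies in the ideal
`I + (F)`; in particular `ã(x₀) = 0` for every `(x₀,…,x_m) ∈ C` with `F(x₀,…,x_m) = 0`. -/
theorem statement16 [Field k] [IsAlgClosed k] {m : ℕ} (hm : 1 ≤ m)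
    (I : Ideal (MvPolynomial (Fin (m + 1)) k)) (hrad : I.IsRadical)
    (hvan : I = MvPolynomial.vanishingIdeal k (MvPolynomial.zeroLocus k I))
    (F : MvPolynomial (Fin (m + 1)) k)
    (hfin : (MvPolynomial.zeroLocus k I ∩ {x | eval x F = 0}).Finite) :
    letI : Algebra (Polynomial k) (MvPolynomial (Fin (m + 1)) k ⧸ I) :=
      ((Polynomial.aeval (Ideal.Quotient.mk I (MvPolynomial.X (0 : Fin (m + 1)))) :
        Polynomial k →ₐ[k] MvPolynomial (Fin (m + 1)) k ⧸ I).toRingHom).toAlgebra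
    ∀ (hfg : Module.Finite (Polynomial k) (MvPolynomial (Fin (m + 1)) k ⧸ I))
      (hfree : Module.Free (Polynomial k) (MvPolynomial (Fin (m + 1)) k ⧸ I)),
      haveI := hfg
      haveI := hfree
      letI χ : Polynomial (Polynomial k) :=
        LinearMap.charpoly
          (LinearMap.mulLeft (Polynomial k) (Ideal.Quotient.mk I F))
      ((χ.coeff 0 ≠ 0) ∧
        (Polynomial.aeval (MvPolynomial.X (0 : Fin (m + 1)) :
            MvPolynomial (Fin (m + 1)) k) (χ.coeff 0) ∈ I ⊔ Ideal.span {F}) ∧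
        (∀ x ∈ MvPolynomial.zeroLocus k I, eval x F = 0 →
          Polynomial.eval (x 0) (χ.coeff 0) = 0)) :=
  statement16_general I F hfin
end

section
/- Let k be an algebraically closed field, V ⊆ k² a finite nonempty set, and λ_1, λ_2 ∈ k nonzero with the following properties: each of the maps (x,y) ↦ x, (x,y) ↦ x+λ_1y, (x,y) ↦ x+λ_2y is injective on V, and, setting m := ∏_{(x,y)∈V}(T−x), m_1 := ∏_{(x,y)∈V}(T−x−λ_1y), m_2 := ∏_{(x,y)∈V}(T−x−λ_2y) in k[T], the map (x,y) ↦ x+λ_2y is injective on W := {(x,y) ∈ k² : m(x)=0 and m_1(x+λ_1y)=0}. Then: (1) there exists a unique polynomial v ∈ k[T] with deg v < #V such that y = v(x) for every (x,y) ∈ V; (2) for every root α ∈ k of m, the monic greatest common divisor in k[Y] of the polynomials m_1(α+λ_1Y) and m_2(α+λ_2Y) equals Y − v(α). -/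
/-!
`v` is the Lagrange interpolant of `y` at the (distinct) nodes `x`. Fix a root `α = x₀` of `m`.
Since the values `x + λ₁y` are distinct, `m₁` and hence `m₁(α + λ₁Y)` are squarefree, and so is
the gcd `g` of `m₁(α + λ₁Y)` and `m₂(α + λ₂Y)`. Both vanish at `y₀ = v(α)`. A common root `r` gives
a point `(α, r)` of `W` on which `x + λ₂y` takes the same value as at some point of `V ⊆ W`, so
injectivity on `W` forces `r = v(α)`. Over an algebraically closed field a squarefree polynomial
whose only root is `v(α)` is `Y − v(α)` up to a unit.
-/

noncomputable section

open Polynomial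

variable {k : Type*}

theorem Polynomial.eval_prod_X_sub_C_eq_zero_iff {R ι : Type*} [CommRing R] [IsDomain R]
    (s : Finset ι) (f : ι → R) (t : R) :
    (∏ i ∈ s, (X - C (f i))).eval t = 0 ↔ ∃ i ∈ s, t = f i := by
  simp [eval_prod, Finset.prod_eq_zero_iff, sub_eq_zero]

theorem Polynomial.isRoot_prod_X_sub_C_comp_C_add_C_mul_X_iff {R ι : Type*} [CommRing R]
    [IsDomain R] (s : Finset ι) (f : ι → R) (a b t : R) :
    ((∏ i ∈ s, (X - C (f i))).comp (C a + C b * X)).IsRoot t ↔ ∃ i ∈ s, a + b * t = f i := by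
  simp only [IsRoot.def, eval_comp, eval_add, eval_mul, eval_C, eval_X,
    eval_prod_X_sub_C_eq_zero_iff]

theorem Lagrange.existsUnique_natDegree_lt_eval_eq {F ι : Type*} [Field F] {s : Finset ι}
    (hs : s.Nonempty) {x : ι → F} (hx : Set.InjOn x s) (y : ι → F) :
    ∃! v : F[X], v.natDegree < s.card ∧ ∀ i ∈ s, y i = v.eval (x i) := by
  classical
  have hdeg (v : F[X]) : v.natDegree < s.card ↔ v.degree < s.card := by
    rcases eq_or_ne v 0 with rfl | hv
    · simpa using hs.card_pos
    · exact natDegree_lt_iff_degree_lt hv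
  refine ⟨interpolate s x y, ?_, fun v hv => ?_⟩
  · exact ⟨(hdeg _).2 (degree_interpolate_lt _ hx),
      fun i hi => (eval_interpolate_at_node _ hx hi).symm⟩
  · exact eq_interpolate_of_eval_eq _ hx ((hdeg v).1 hv.1) fun i hi => (hv.2 i hi).symm

theorem Squarefree.map_mulEquiv {M N : Type*} [Monoid M] [Monoid N] (e : M ≃* N) {x : M}
    (hx : Squarefree x) : Squarefree (e x) := fun y hy => by
  have : e.symm y * e.symm y ∣ x := by simpa using map_dvd e.symm hy
  simpa using (hx _ this).map e

theorem Squarefree.comp_C_add_C_mul_X {F : Type*} [Field F] {p : F[X]} (hp : Squarefree p)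
    (a : F) {b : F} (hb : b ≠ 0) : Squarefree (p.comp (C a + C b * X)) := by
  let := invertibleOfNonzero hb
  simpa [comp_eq_aeval, add_comm] using hp.map_mulEquiv (algEquivCMulXAddC b a).toMulEquiv

theorem Polynomial.squarefree_prod_X_sub_C {F ι : Type*} [Field F] {s : Finset ι} {f : ι → F}
    (hf : Set.InjOn f s) : Squarefree (∏ i ∈ s, (X - C (f i))) :=
  (separable_prod_X_sub_C_iff'.2 fun _ hi _ hj => hf hi hj).squarefree

theorem Polynomial.associated_X_sub_C_of_squarefree {F : Type*} [Field F] [IsAlgClosed F]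
    {g : F[X]} (hg : Squarefree g) {β : F} (hβ : g.IsRoot β) (hroots : ∀ r, g.IsRoot r → r = β) :
    Associated (X - C β) g := by
  classical
  have hg0 : g ≠ 0 := hg.ne_zero
  have hnodup : g.roots.Nodup :=
    nodup_roots ((PerfectField.separable_iff_squarefree).2 hg)
  have hcount : g.roots.count β = g.roots.card :=
    Multiset.count_eq_card.2 fun r hr => (hroots r (mem_roots hg0 |>.1 hr)).symm
  have hdeg : g.natDegree ≤ 1 := by
    rw [← IsAlgClosed.card_roots_eq_natDegree, ← hcount]
    exact Multiset.nodup_iff_count_le_one.1 hnodup β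
  exact associated_of_dvd_of_natDegree_le (dvd_iff_isRoot.2 hβ) hg0
    (by rwa [natDegree_X_sub_C])

theorem Polynomial.span_pair_eq_span_X_sub_C {F : Type*} [Field F] [IsAlgClosed F]
    {A B : F[X]} (hA : Squarefree A) {β : F} (hAβ : A.IsRoot β) (hBβ : B.IsRoot β)
    (hroots : ∀ r, A.IsRoot r → B.IsRoot r → r = β) :
    Ideal.span {A, B} = Ideal.span {X - C β} := by
  classical
  set g := EuclideanDomain.gcd A B
  have hgA : g ∣ A := EuclideanDomain.gcd_dvd_left A B
  have hgB : g ∣ B := EuclideanDomain.gcd_dvd_right A B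
  have hgβ : g.IsRoot β := dvd_iff_isRoot.1 <|
    EuclideanDomain.dvd_gcd (dvd_iff_isRoot.2 hAβ) (dvd_iff_isRoot.2 hBβ)
  have hg : Associated (X - C β) g :=
    associated_X_sub_C_of_squarefree (hA.squarefree_of_dvd hgA) hgβ fun r hr =>
      hroots r (hr.dvd hgA) (hr.dvd hgB)
  rw [← EuclideanDomain.span_gcd, Ideal.span_singleton_eq_span_singleton.2 hg.symm]

theorem statement17_general [Field k] [IsAlgClosed k]
    (V : Finset (k × k)) (hVne : V.Nonempty)
    (lam1 lam2 : k) (h1 : lam1 ≠ 0)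
    (hinj0 : ∀ q ∈ V, ∀ q' ∈ V, q.1 = q'.1 → q = q')
    (hinj1 : ∀ q ∈ V, ∀ q' ∈ V, q.1 + lam1 * q.2 = q'.1 + lam1 * q'.2 → q = q')
    (hinjW : ∀ q q' : k × k,
      (∏ v ∈ V, (X - C v.1)).eval q.1 = 0 →
      (∏ v ∈ V, (X - C (v.1 + lam1 * v.2))).eval (q.1 + lam1 * q.2) = 0 →
      (∏ v ∈ V, (X - C v.1)).eval q'.1 = 0 →
      (∏ v ∈ V, (X - C (v.1 + lam1 * v.2))).eval (q'.1 + lam1 * q'.2) = 0 →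
      q.1 + lam2 * q.2 = q'.1 + lam2 * q'.2 → q = q') :
    ∃ v : Polynomial k,
      -- (1) `v` is the unique polynomial of degree `< #V` with `y = v(x)` on `V`
      (v.natDegree < V.card ∧ ∀ q ∈ V, q.2 = v.eval q.1) ∧
      (∀ v' : Polynomial k,
        (v'.natDegree < V.card ∧ ∀ q ∈ V, q.2 = v'.eval q.1) → v' = v) ∧
      -- (2) for every root `α` of `m`, the monic gcd of `m₁(α+λ₁Y)` and `m₂(α+λ₂Y)` is
      -- `Y − v(α)`
      (∀ α : k, (∏ w ∈ V, (X - C w.1)).eval α = 0 →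
        Ideal.span {(∏ w ∈ V, (X - C (w.1 + lam1 * w.2))).comp (C α + C lam1 * X),
            (∏ w ∈ V, (X - C (w.1 + lam2 * w.2))).comp (C α + C lam2 * X)}
          = Ideal.span {(X : Polynomial k) - C (v.eval α)}) := by
  obtain ⟨v, hv, hv_unique⟩ :=
    Lagrange.existsUnique_natDegree_lt_eval_eq hVne (x := Prod.fst) hinj0 Prod.snd
  refine ⟨v, hv, hv_unique, fun α hα => ?_⟩
  obtain ⟨q, hq, rfl⟩ := (eval_prod_X_sub_C_eq_zero_iff V Prod.fst α).1 hα
  have hm (w : k × k) (hw : w ∈ V) : (∏ v ∈ V, (X - C v.1)).eval w.1 = 0 :=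
    (eval_prod_X_sub_C_eq_zero_iff _ _ _).2 ⟨w, hw, rfl⟩
  have hm1 (w : k × k) (hw : w ∈ V) :
      (∏ v ∈ V, (X - C (v.1 + lam1 * v.2))).eval (w.1 + lam1 * w.2) = 0 :=
    (eval_prod_X_sub_C_eq_zero_iff _ _ _).2 ⟨w, hw, rfl⟩
  rw [← hv.2 q hq]
  refine span_pair_eq_span_X_sub_C ((squarefree_prod_X_sub_C hinj1).comp_C_add_C_mul_X _ h1)
    ((isRoot_prod_X_sub_C_comp_C_add_C_mul_X_iff ..).2 ⟨q, hq, rfl⟩)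
    ((isRoot_prod_X_sub_C_comp_C_add_C_mul_X_iff ..).2 ⟨q, hq, rfl⟩) fun r hrA hrB => ?_
  obtain ⟨w, hw, hwr⟩ := (isRoot_prod_X_sub_C_comp_C_add_C_mul_X_iff ..).1 hrB
  have hA : (∏ v ∈ V, (X - C (v.1 + lam1 * v.2))).eval (q.1 + lam1 * r) = 0 := by
    simpa [eval_comp] using hrA
  -- `(q.1, r) ∈ W` has the same `x + λ₂y` as `w ∈ V ⊆ W`
  have hqw : ((q.1, r) : k × k) = w := hinjW (q.1, r) w hα hA (hm w hw) (hm1 w hw) hwr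
  rw [hinj0 q hq w hw (Prod.ext_iff.1 hqw).1, ← (Prod.ext_iff.1 hqw).2]

/-- bidimensional shape lemma.  Let `V ⊆ k²` be a finite nonempty set and
`λ₁, λ₂` nonzero scalars such that `x`, `x + λ₁y` and `x + λ₂y` are injective on `V` and,
with `m, m₁, m₂` the products of `T − x`, `T − (x+λ₁y)`, `T − (x+λ₂y)` over `V`, the form
`x + λ₂y` is injective on `W = {m(x) = 0, m₁(x+λ₁y) = 0}`.  Then there is a unique `v ∈ k[T]`
with `deg v < #V` interpolating `y` in terms of `x` on `V`, and for every root `α` of `m` the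
monic gcd of `m₁(α+λ₁Y)` and `m₂(α+λ₂Y)` — i.e. the monic generator of the ideal they
generate — is `Y − v(α)`. -/
theorem statement17 [Field k] [IsAlgClosed k]
    (V : Finset (k × k)) (hVne : V.Nonempty)
    (lam1 lam2 : k) (h1 : lam1 ≠ 0) (h2 : lam2 ≠ 0)
    (hinj0 : ∀ q ∈ V, ∀ q' ∈ V, q.1 = q'.1 → q = q')
    (hinj1 : ∀ q ∈ V, ∀ q' ∈ V, q.1 + lam1 * q.2 = q'.1 + lam1 * q'.2 → q = q')
    (hinj2 : ∀ q ∈ V, ∀ q' ∈ V, q.1 + lam2 * q.2 = q'.1 + lam2 * q'.2 → q = q')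
    (hinjW : ∀ q q' : k × k,
      (∏ v ∈ V, (X - C v.1)).eval q.1 = 0 →
      (∏ v ∈ V, (X - C (v.1 + lam1 * v.2))).eval (q.1 + lam1 * q.2) = 0 →
      (∏ v ∈ V, (X - C v.1)).eval q'.1 = 0 →
      (∏ v ∈ V, (X - C (v.1 + lam1 * v.2))).eval (q'.1 + lam1 * q'.2) = 0 →
      q.1 + lam2 * q.2 = q'.1 + lam2 * q'.2 → q = q') :
    ∃ v : Polynomial k,
      -- (1) `v` is the unique polynomial of degree `< #V` with `y = v(x)` on `V`
      (v.natDegree < V.card ∧ ∀ q ∈ V, q.2 = v.eval q.1) ∧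
      (∀ v' : Polynomial k,
        (v'.natDegree < V.card ∧ ∀ q ∈ V, q.2 = v'.eval q.1) → v' = v) ∧
      -- (2) for every root `α` of `m`, the monic gcd of `m₁(α+λ₁Y)` and `m₂(α+λ₂Y)` is
      -- `Y − v(α)`
      (∀ α : k, (∏ w ∈ V, (X - C w.1)).eval α = 0 →
        Ideal.span {(∏ w ∈ V, (X - C (w.1 + lam1 * w.2))).comp (C α + C lam1 * X),
            (∏ w ∈ V, (X - C (w.1 + lam2 * w.2))).comp (C α + C lam2 * X)}
          = Ideal.span {(X : Polynomial k) - C (v.eval α)}) :=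
  statement17_general V hVne lam1 lam2 h1 hinj0 hinj1 hinjW
end
end
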